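/- (Monotonicity of optimal thresholds.) For λ ∈ ℝ, let θ*(λ) denote the least minimizer of θ ↦ J(θ,λ) over the finite set {1,…,S+1}. Then θ*(λ) is nondecreasing in λ: for all λ, λ' ∈ ℝ with λ' ≥ λ, θ*(λ') ≥ θ*(λ). -/

import Mathlib

open Finset

/-- β_{θ,ρ} = 1/(θ-1+1/ρ) -/
noncomputable def bet (ρ : ℝ) (θ : ℕ) : ℝ := 1 / ((θ : ℝ) - 1 + 1 / ρ)

/-- Stationary distribution d^θ on {1,…,S} under the threshold policy θ;
for θ = S+1 it is the point mass at S. -/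
noncomputable def dstat (S : ℕ) (ρ : ℝ) (θ : ℕ) (z : ℕ) : ℝ :=
  if θ = S + 1 then (if z = S then 1 else 0)
  else if z < θ then bet ρ θ
  else if z < S then (1 - ρ) ^ (z - θ) * bet ρ θ
  else (1 - ρ) ^ (S - θ) * bet ρ θ / ρ

/-- Average cost J(θ,λ) = Σ_z d^θ(z)h(z) + (λ+τ)·Σ_{z=θ}^S d^θ(z). -/
noncomputable def Jcost (S : ℕ) (ρ : ℝ) (h : ℕ → ℝ) (τ : ℝ) (θ : ℕ) (lam : ℝ) : ℝ :=
  (∑ z ∈ Finset.Icc 1 S, dstat S ρ θ z * h z)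
    + (lam + τ) * ∑ z ∈ Finset.Icc θ S, dstat S ρ θ z

/-- θs is the least minimizer of θ ↦ J(θ,λ) over {1,…,S+1}. -/
def IsLeastMinimizer (S : ℕ) (ρ : ℝ) (h : ℕ → ℝ) (τ : ℝ) (lam : ℝ) (θs : ℕ) : Prop :=
  θs ∈ Finset.Icc 1 (S + 1) ∧
  (∀ ξ ∈ Finset.Icc 1 (S + 1), Jcost S ρ h τ θs lam ≤ Jcost S ρ h τ ξ lam) ∧
  (∀ ξ ∈ Finset.Icc 1 (S + 1),
    (∀ ζ ∈ Finset.Icc 1 (S + 1), Jcost S ρ h τ ξ lam ≤ Jcost S ρ h τ ζ lam) → θs ≤ ξ)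

/-- For 1 ≤ θ, β_{θ,ρ} > 0. -/
lemma bet_pos (ρ : ℝ) (hρ0 : 0 < ρ) (θ : ℕ) (hθ1 : 1 ≤ θ) : 0 < bet ρ θ := by
  have hθ : (1 : ℝ) ≤ (θ : ℝ) := by exact_mod_cast hθ1
  have h1ρ : 0 < 1 / ρ := one_div_pos.mpr hρ0
  have : 0 < (θ : ℝ) - 1 + 1 / ρ := by linarith
  exact one_div_pos.mpr this

/-- The tail mass G(θ) = Σ_{z=θ}^S d^θ(z) equals β_{θ,ρ}/ρ for 1 ≤ θ ≤ S. -/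
lemma sum_dstat_tail (S θ : ℕ) (hθS : θ ≤ S)
    (ρ : ℝ) (hρ0 : 0 < ρ) :
    ∑ z ∈ Finset.Icc θ S, dstat S ρ θ z = bet ρ θ / ρ := by
  have hq : (1 - ρ : ℝ) ≠ 1 := by intro hc; nlinarith
  have hne : θ ≠ S + 1 := by omega
  have h1 : ∑ z ∈ Finset.Icc θ S, dstat S ρ θ z
      = (∑ z ∈ Finset.Ico θ S, dstat S ρ θ z) + dstat S ρ θ S := by
    rw [← Finset.Ico_add_one_right_eq_Icc, Finset.sum_Ico_succ_top hθS]
  have h2 : ∀ z ∈ Finset.Ico θ S, dstat S ρ θ z = (1 - ρ) ^ (z - θ) * bet ρ θ := by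
    intro z hz
    rw [Finset.mem_Ico] at hz
    simp only [dstat, hne, if_false, if_neg (by omega : ¬ z < θ), if_pos hz.2]
  rw [h1, Finset.sum_congr rfl h2, Finset.sum_Ico_eq_sum_range]
  simp only [Nat.add_sub_cancel_left]
  rw [← Finset.sum_mul, geom_sum_eq hq]
  have hd : dstat S ρ θ S = (1 - ρ) ^ (S - θ) * bet ρ θ / ρ := by
    simp only [dstat, hne, if_false, if_neg (by omega : ¬ S < θ), if_neg (lt_irrefl S)]
  rw [hd]
  have : (1 - ρ - 1 : ℝ) = -ρ := by ring
  rw [this]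
  have hρ' : ρ ≠ 0 := hρ0.ne'
  field_simp
  ring

/-- The tail mass is antitone on {1,…,S+1}. -/
lemma tail_antitone (S : ℕ) (ρ : ℝ) (hρ0 : 0 < ρ) (a b : ℕ)
    (ha1 : 1 ≤ a) (hab : a ≤ b) (hb : b ≤ S + 1) :
    ∑ z ∈ Finset.Icc b S, dstat S ρ b z ≤ ∑ z ∈ Finset.Icc a S, dstat S ρ a z := by
  by_cases hbS : b = S + 1
  · have hempty : Finset.Icc b S = ∅ := by
      apply Finset.Icc_eq_empty; omega
    rw [hempty]
    simp only [Finset.sum_empty]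
    by_cases haS : a = S + 1
    · rw [haS]
      have : Finset.Icc (S + 1) S = (∅ : Finset ℕ) := by
        apply Finset.Icc_eq_empty; omega
      simp [this]
    · have haS' : a ≤ S := by omega
      rw [sum_dstat_tail S a haS' ρ hρ0]
      exact le_of_lt (div_pos (bet_pos ρ hρ0 a ha1) hρ0)
  · have hbS' : b ≤ S := by omega
    have haS' : a ≤ S := le_trans hab hbS'
    rw [sum_dstat_tail S a haS' ρ hρ0, sum_dstat_tail S b hbS' ρ hρ0]
    apply div_le_div_of_nonneg_right _ hρ0.le
    have ha : (1 : ℝ) ≤ (a : ℝ) := by exact_mod_cast ha1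
    have habR : (a : ℝ) ≤ (b : ℝ) := by exact_mod_cast hab
    have h1ρ : 0 < 1 / ρ := one_div_pos.mpr hρ0
    have hda : 0 < (a : ℝ) - 1 + 1 / ρ := by linarith
    exact one_div_le_one_div_of_le hda (by linarith)

/-- the least minimizer θ*(λ) is nondecreasing in λ. -/
theorem optimal_threshold_monotone
    (S : ℕ) (hS : 2 ≤ S) (ρ : ℝ) (hρ0 : 0 < ρ) (hρ1 : ρ ≤ 1)
    (h : ℕ → ℝ) (τ : ℝ)
    (lam lam' : ℝ) (hlam : lam ≤ lam')
    (θs θs' : ℕ)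
    (hθs : IsLeastMinimizer S ρ h τ lam θs)
    (hθs' : IsLeastMinimizer S ρ h τ lam' θs') :
    θs ≤ θs' := by
  obtain ⟨hm1, hmin, hleast⟩ := hθs
  obtain ⟨hm1', hmin', _⟩ := hθs'
  by_contra hcon
  push_neg at hcon  -- θs' < θs
  set G : ℕ → ℝ := fun θ => ∑ z ∈ Finset.Icc θ S, dstat S ρ θ z with hG
  have hJ : ∀ θ : ℕ, Jcost S ρ h τ θ lam' = Jcost S ρ h τ θ lam + (lam' - lam) * G θ := by
    intro θ; simp only [Jcost, hG]; ring
  -- θs' is not a minimizer at lam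
  have h2 : ¬ ∀ ζ ∈ Finset.Icc 1 (S + 1), Jcost S ρ h τ θs' lam ≤ Jcost S ρ h τ ζ lam := by
    intro hc
    exact absurd (hleast θs' hm1' hc) (by omega)
  push_neg at h2
  obtain ⟨ζ, hζ, hζlt⟩ := h2
  have hstrict : Jcost S ρ h τ θs lam < Jcost S ρ h τ θs' lam :=
    lt_of_le_of_lt (hmin ζ hζ) hζlt
  have h3 : Jcost S ρ h τ θs' lam' ≤ Jcost S ρ h τ θs lam' := hmin' θs hm1
  rw [hJ θs', hJ θs] at h3
  rw [Finset.mem_Icc] at hm1 hm1'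
  have hGmono : G θs ≤ G θs' :=
    tail_antitone S ρ hρ0 θs' θs hm1'.1 (le_of_lt hcon) hm1.2
  nlinarith [mul_le_mul_of_nonneg_left hGmono (sub_nonneg.mpr hlam)]
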